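/- arXiv:1309.2408 — 4 statements merged into one kernel-verified Lean document; each statement's English description precedes it below -/
import Mathlib

section
/- For finite sums of Dirac measures μ = Σ_{i=1}^L m_i δ_{x_i} and ν = Σ_{i=1}^L m̃_i δ_{x̃_i} on ℝ≥0 with nonnegative masses, the flat distance satisfies ρ_F(μ, ν) ≤ max{1, Σ_i |m_i|} · Σ_i (|x_i - x̃_i| + |m_i - m̃_i|). -/
open MeasureTheory

/-- The flat metric (bounded Lipschitz distance) between measures. -/
noncomputable def flatDist (μ ν : Measure ℝ) : ℝ :=
  sSup {r : ℝ | ∃ ψ : ℝ → ℝ, LipschitzWith 1 ψ ∧ (∀ x, |ψ x| ≤ 1) ∧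
    r = ∫ x, ψ x ∂μ - ∫ x, ψ x ∂ν}

theorem flatDist_sum_dirac_le (L : ℕ) (m mt x xt : Fin L → ℝ)
    (hm : ∀ i, 0 ≤ m i) (hmt : ∀ i, 0 ≤ mt i)
    (hx : ∀ i, 0 ≤ x i) (hxt : ∀ i, 0 ≤ xt i) :
    flatDist (∑ i, ENNReal.ofReal (m i) • Measure.dirac (x i))
        (∑ i, ENNReal.ofReal (mt i) • Measure.dirac (xt i)) ≤
      max 1 (∑ i, |m i|) * ∑ i, (|x i - xt i| + |m i - mt i|) := by
  set C := max 1 (∑ i, |m i|) with hC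
  have hC1 : (1:ℝ) ≤ C := le_max_left _ _
  have hC0 : (0:ℝ) ≤ C := le_trans zero_le_one hC1
  have hS0 : 0 ≤ ∑ i, (|x i - xt i| + |m i - mt i|) :=
    Finset.sum_nonneg fun i _ => add_nonneg (abs_nonneg _) (abs_nonneg _)
  apply Real.sSup_le _ (mul_nonneg hC0 hS0)
  rintro r ⟨ψ, hlip, hbd, rfl⟩
  have hmeas : Measurable ψ := hlip.continuous.measurable
  have hint : ∀ (c a : ℝ), Integrable ψ (ENNReal.ofReal c • Measure.dirac a) := by
    intro c a
    exact ((integrable_const (1:ℝ)).mono' hmeas.aestronglyMeasurable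
      (ae_of_all _ hbd)).smul_measure ENNReal.ofReal_ne_top
  have hone : ∀ (c a : ℝ), 0 ≤ c →
      ∫ y, ψ y ∂(ENNReal.ofReal c • Measure.dirac a) = c * ψ a := by
    intro c a hc
    rw [integral_smul_measure, integral_dirac, ENNReal.toReal_ofReal hc, smul_eq_mul]
  have hμ : ∫ y, ψ y ∂(∑ i, ENNReal.ofReal (m i) • Measure.dirac (x i)) =
      ∑ i, m i * ψ (x i) := by
    rw [integral_finset_sum_measure (fun i _ => hint _ _)]
    exact Finset.sum_congr rfl fun i _ => hone _ _ (hm i)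
  have hν : ∫ y, ψ y ∂(∑ i, ENNReal.ofReal (mt i) • Measure.dirac (xt i)) =
      ∑ i, mt i * ψ (xt i) := by
    rw [integral_finset_sum_measure (fun i _ => hint _ _)]
    exact Finset.sum_congr rfl fun i _ => hone _ _ (hmt i)
  rw [hμ, hν, ← Finset.sum_sub_distrib, Finset.mul_sum]
  apply Finset.sum_le_sum
  intro i _
  have key : m i * ψ (x i) - mt i * ψ (xt i) =
      m i * (ψ (x i) - ψ (xt i)) + (m i - mt i) * ψ (xt i) := by ring
  rw [key]
  have h1 : m i * (ψ (x i) - ψ (xt i)) ≤ C * |x i - xt i| := by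
    have hlipb : |ψ (x i) - ψ (xt i)| ≤ |x i - xt i| := by
      have := hlip.dist_le_mul (x i) (xt i)
      simpa [Real.dist_eq] using this
    have hmC : m i ≤ C := le_trans (le_abs_self _)
      (le_trans (Finset.single_le_sum (fun j _ => abs_nonneg (m j)) (Finset.mem_univ i))
        (le_max_right _ _))
    calc m i * (ψ (x i) - ψ (xt i)) ≤ m i * |x i - xt i| := by
          exact mul_le_mul_of_nonneg_left (le_trans (le_abs_self _) hlipb) (hm i)
      _ ≤ C * |x i - xt i| := mul_le_mul_of_nonneg_right hmC (abs_nonneg _)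
  have h2 : (m i - mt i) * ψ (xt i) ≤ C * |m i - mt i| := by
    calc (m i - mt i) * ψ (xt i) ≤ |(m i - mt i) * ψ (xt i)| := le_abs_self _
      _ = |m i - mt i| * |ψ (xt i)| := abs_mul _ _
      _ ≤ |m i - mt i| * 1 := mul_le_mul_of_nonneg_left (hbd _) (abs_nonneg _)
      _ = |m i - mt i| := mul_one _
      _ ≤ C * |m i - mt i| := le_mul_of_one_le_left (abs_nonneg _) hC1
  calc m i * (ψ (x i) - ψ (xt i)) + (m i - mt i) * ψ (xt i)
      ≤ C * |x i - xt i| + C * |m i - mt i| := add_le_add h1 h2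
    _ = C * (|x i - xt i| + |m i - mt i|) := by ring
end

section
/- Let (E, ρ) be a metric space and S a Lipschitz semiflow with constant L on [0,T]. For every Lipschitz continuous curve ν : [0,T] → E, the estimate ρ(ν_t, S(t;0)ν_0) ≤ L ∫_0^t liminf_{h↓0} ρ(ν_{τ+h}, S(h;τ)ν_τ)/h dτ holds for all t ∈ [0,T], provided the integrand is measurable. -/
/-!
Compare `ν` with the flow started from `ν` at a variable time: the defect
`τ ↦ ρ(ν_t, S(t - τ; τ) ν_τ)` equals the left-hand side at `τ = 0` and vanishes at `τ = t`.
The semigroup law writes `S(t - τ; τ) ν_τ` and `S(t - τ - h; τ + h) ν_{τ+h}` as images of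
`S(h; τ) ν_τ` and `ν_{τ+h}` under the same map `S(t - τ - h; τ + h)`, so the defect is Lipschitz
in `τ` and drops by at most `L ρ(ν_{τ+h}, S(h; τ) ν_τ)` over `[τ, τ + h]`. A Lipschitz function is
absolutely continuous, hence the integral of its a.e. derivative, and that derivative is bounded
below by `-L` times the liminf in the integrand.
-/

open MeasureTheory Set
open Filter Topology

theorem LipschitzOnWith.sub_le_integral_of_ae_neg_le_deriv {g F : ℝ → ℝ} {K : NNReal} {a b : ℝ}
    (hab : a ≤ b) (hg : LipschitzOnWith K g (Icc a b)) (hF : IntervalIntegrable F volume a b)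
    (h : ∀ᵐ x, x ∈ Ioo a b → DifferentiableAt ℝ g x → -F x ≤ deriv g x) :
    g a - g b ≤ ∫ x in a..b, F x := by
  have hac : AbsolutelyContinuousOnInterval g a b :=
    LipschitzOnWith.absolutelyContinuousOnInterval (by rwa [uIcc_of_le hab])
  have hle : ∀ᵐ x ∂volume.restrict (Icc a b), -deriv g x ≤ F x := by
    rw [← Measure.restrict_congr_set Ioo_ae_eq_Icc, ae_restrict_iff' measurableSet_Ioo]
    filter_upwards [h, hac.ae_differentiableAt] with x hx hdiff hmem
    exact neg_le.1 (hx hmem (hdiff (Icc_subset_uIcc (Ioo_subset_Icc_self hmem))))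
  calc g a - g b = ∫ x in a..b, -deriv g x := by
        rw [intervalIntegral.integral_neg, hac.integral_deriv_eq_sub, neg_sub]
    _ ≤ ∫ x in a..b, F x :=
        intervalIntegral.integral_mono_ae_restrict hab hac.intervalIntegrable_deriv.neg hF hle

structure IsLipschitzSemiflow {E : Type*} [Dist E] (S : ℝ → ℝ → E → E) (T L : ℝ) :
    Prop where
  map_zero : ∀ τ ∈ Icc (0:ℝ) T, ∀ μ : E, S 0 τ μ = μ
  map_add : ∀ s t τ : ℝ, 0 ≤ s → 0 ≤ t → 0 ≤ τ → τ + s + t ≤ T →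
    ∀ μ : E, S (t + s) τ μ = S t (τ + s) (S s τ μ)
  dist_le : ∀ s t τ : ℝ, 0 ≤ s → 0 ≤ t → 0 ≤ τ → τ + s ≤ T → τ + t ≤ T →
    ∀ μ ν : E, dist (S t τ μ) (S s τ ν) ≤ L * (dist μ ν + |t - s|)

def flowDefect {E : Type*} [Dist E] (S : ℝ → ℝ → E → E) (ν : ℝ → E) (t τ : ℝ) : ℝ :=
  dist (ν t) (S (t - τ) τ (ν τ))

namespace IsLipschitzSemiflow

variable {E : Type*} [PseudoMetricSpace E] {S : ℝ → ℝ → E → E} {T L : ℝ} {ν : ℝ → E}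
  {Lν : NNReal}

theorem dist_self_le (hS : IsLipschitzSemiflow S T L) {h τ : ℝ} (hh : 0 ≤ h) (hτ : 0 ≤ τ)
    (hτh : τ + h ≤ T) (μ : E) : dist μ (S h τ μ) ≤ L * h := by
  have := hS.dist_le h 0 τ hh le_rfl hτ hτh (by linarith) μ μ
  rwa [hS.map_zero τ ⟨hτ, by linarith⟩, dist_self, zero_add, zero_sub, abs_neg,
    abs_of_nonneg hh] at this

theorem dist_evolve_le (hS : IsLipschitzSemiflow S T L) {σ τ t : ℝ} (hσ : 0 ≤ σ) (hστ : σ ≤ τ)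
    (hτt : τ ≤ t) (ht : t ≤ T) (μ μ' : E) :
    dist (S (t - τ) τ μ) (S (t - σ) σ μ') ≤ L * dist μ (S (τ - σ) σ μ') := by
  have hsplit := hS.map_add (τ - σ) (t - τ) σ (by linarith) (by linarith) hσ (by linarith) μ'
  rw [sub_add_sub_cancel, add_sub_cancel] at hsplit
  have := hS.dist_le (t - τ) (t - τ) τ (by linarith) (by linarith) (by linarith) (by linarith)
    (by linarith) μ (S (τ - σ) σ μ')
  rwa [sub_self, abs_zero, add_zero, ← hsplit] at this


theorem dist_curve_flow_le (hS : IsLipschitzSemiflow S T L) (hν : LipschitzOnWith Lν ν (Icc 0 T))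
    {σ τ : ℝ} (hσ : 0 ≤ σ) (hστ : σ ≤ τ) (hτ : τ ≤ T) :
    dist (ν τ) (S (τ - σ) σ (ν σ)) ≤ (Lν + L) * (τ - σ) := by
  have hcurve : dist (ν τ) (ν σ) ≤ Lν * (τ - σ) := by
    simpa [Real.dist_eq, abs_of_nonneg (sub_nonneg.2 hστ)] using
      hν.dist_le_mul τ ⟨hσ.trans hστ, hτ⟩ σ ⟨hσ, hστ.trans hτ⟩
  have hflow := hS.dist_self_le (sub_nonneg.2 hστ) hσ (by linarith) (ν σ)
  calc dist (ν τ) (S (τ - σ) σ (ν σ)) ≤ dist (ν τ) (ν σ) + dist (ν σ) (S (τ - σ) σ (ν σ)) :=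
        dist_triangle _ _ _
    _ ≤ (Lν + L) * (τ - σ) := by linarith

theorem flowDefect_self (hS : IsLipschitzSemiflow S T L) {t : ℝ} (ht : t ∈ Icc 0 T) :
    flowDefect S ν t t = 0 := by
  rw [flowDefect, sub_self, hS.map_zero t ht, dist_self]

theorem abs_flowDefect_sub_le (hS : IsLipschitzSemiflow S T L) {σ τ t : ℝ} (hσ : 0 ≤ σ)
    (hστ : σ ≤ τ) (hτt : τ ≤ t) (ht : t ≤ T) :
    |flowDefect S ν t σ - flowDefect S ν t τ| ≤ L * dist (ν τ) (S (τ - σ) σ (ν σ)) := by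
  rw [flowDefect, flowDefect, dist_comm (ν t), dist_comm (ν t)]
  exact (abs_dist_sub_le _ _ _).trans
    ((dist_comm _ _).trans_le (hS.dist_evolve_le hσ hστ hτt ht _ _))

theorem lipschitzOnWith_flowDefect (hS : IsLipschitzSemiflow S T L) (hL : 0 ≤ L)
    (hν : LipschitzOnWith Lν ν (Icc 0 T)) {t : ℝ} (ht : t ≤ T) :
    LipschitzOnWith (Real.toNNReal (L * (Lν + L))) (flowDefect S ν t) (Icc 0 t) := by
  refine LipschitzOnWith.of_dist_le' fun x hx y hy => ?_
  wlog hxy : x ≤ y generalizing x y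
  · rw [dist_comm, dist_comm x]
    exact this y hy x hx (le_of_not_ge hxy)
  rw [Real.dist_eq, Real.dist_eq, abs_sub_comm x, abs_of_nonneg (sub_nonneg.2 hxy)]
  calc |flowDefect S ν t x - flowDefect S ν t y| ≤ L * dist (ν y) (S (y - x) x (ν x)) :=
        hS.abs_flowDefect_sub_le hx.1 hxy hy.2 ht
    _ ≤ L * ((Lν + L) * (y - x)) := by
        gcongr
        exact hS.dist_curve_flow_le hν hx.1 hxy (hy.2.trans ht)
    _ = L * (Lν + L) * (y - x) := by ring

theorem neg_deriv_flowDefect_le (hS : IsLipschitzSemiflow S T L) (hL : 0 < L)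
    (hν : LipschitzOnWith Lν ν (Icc 0 T)) {τ t : ℝ} (hτ : 0 ≤ τ) (hτt : τ < t) (ht : t ≤ T)
    (hdiff : DifferentiableAt ℝ (flowDefect S ν t) τ) :
    -deriv (flowDefect S ν t) τ ≤
      L * liminf (fun h => dist (ν (τ + h)) (S h τ (ν τ)) / h) (𝓝[>] 0) := by
  set g := flowDefect S ν t
  set q := fun h => dist (ν (τ + h)) (S h τ (ν τ)) / h
  have hslope : Tendsto (fun h => (g τ - g (τ + h)) / h / L) (𝓝[>] 0)
      (𝓝 (-deriv g τ / L)) := by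
    refine (hdiff.hasDerivAt.tendsto_slope_zero_right.neg.div_const L).congr fun h => ?_
    rw [smul_eq_mul]; ring
  have hsmall : ∀ᶠ h in 𝓝[>] (0:ℝ), h ∈ Ioo 0 (t - τ) := Ioo_mem_nhdsGT (sub_pos.2 hτt)
  have hslope_le : ∀ᶠ h in 𝓝[>] 0, (g τ - g (τ + h)) / h / L ≤ q h := by
    filter_upwards [hsmall] with h ⟨h0, hht⟩
    have := (le_abs_self _).trans
      (hS.abs_flowDefect_sub_le (ν := ν) hτ (le_add_of_nonneg_right h0.le) (by linarith) ht)
    rw [add_sub_cancel_left] at this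
    rw [div_right_comm, div_le_div_iff_of_pos_right h0, div_le_iff₀' hL]
    exact this
  have hq_le : ∀ᶠ h in 𝓝[>] 0, q h ≤ Lν + L := by
    filter_upwards [hsmall] with h ⟨h0, hht⟩
    have := hS.dist_curve_flow_le hν hτ (le_add_of_nonneg_right h0.le) (by linarith)
    rw [add_sub_cancel_left] at this
    exact (div_le_iff₀ h0).2 this
  calc -deriv g τ = L * (-deriv g τ / L) := by field_simp
    _ ≤ L * liminf q (𝓝[>] 0) := by
        gcongr
        rw [← hslope.liminf_eq]
        exact liminf_le_liminf hslope_le hslope.isBoundedUnder_ge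
          (isCoboundedUnder_ge_of_eventually_le _ hq_le)

end IsLipschitzSemiflow

theorem semiflow_error_estimate_general {E : Type*} [MetricSpace E] (T L : ℝ) (hL : 0 < L)
    (S : ℝ → ℝ → E → E)
    (hS0 : ∀ τ ∈ Icc (0:ℝ) T, ∀ μ : E, S 0 τ μ = μ)
    (hSsemi : ∀ s t τ : ℝ, 0 ≤ s → 0 ≤ t → 0 ≤ τ → τ + s + t ≤ T →
      ∀ μ : E, S (t + s) τ μ = S t (τ + s) (S s τ μ))
    (hSlip : ∀ s t τ : ℝ, 0 ≤ s → 0 ≤ t → 0 ≤ τ → τ + s ≤ T → τ + t ≤ T →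
      ∀ μ ν : E, dist (S t τ μ) (S s τ ν) ≤ L * (dist μ ν + |t - s|))
    (ν : ℝ → E) (Lν : NNReal) (hν : LipschitzOnWith Lν ν (Icc 0 T))
    (f : ℝ → ℝ)
    (hf : ∀ τ ∈ Ico (0:ℝ) T,
      f τ = Filter.liminf (fun h : ℝ => dist (ν (τ + h)) (S h τ (ν τ)) / h)
              (nhdsWithin 0 (Ioi 0)))
    (hfint : IntervalIntegrable f volume 0 T) :
    ∀ t ∈ Icc (0:ℝ) T, dist (ν t) (S t 0 (ν 0)) ≤ L * ∫ τ in (0:ℝ)..t, f τ := by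
  rintro t ⟨ht0, htT⟩
  have hS : IsLipschitzSemiflow S T L := ⟨hS0, hSsemi, hSlip⟩
  have hfint_t : IntervalIntegrable (fun τ => L * f τ) volume 0 t :=
    (hfint.mono_set (by rw [uIcc_of_le ht0, uIcc_of_le (ht0.trans htT)]; gcongr)).const_mul L
  have hderiv : ∀ τ ∈ Ioo 0 t, DifferentiableAt ℝ (flowDefect S ν t) τ →
      -(L * f τ) ≤ deriv (flowDefect S ν t) τ := fun τ hτ hdiff => by
    rw [neg_le, hf τ ⟨hτ.1.le, hτ.2.trans_le htT⟩]
    exact hS.neg_deriv_flowDefect_le hL hν hτ.1.le hτ.2 htT hdiff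
  have hdefect := (hS.lipschitzOnWith_flowDefect hL.le hν htT).sub_le_integral_of_ae_neg_le_deriv
    ht0 hfint_t (ae_of_all _ hderiv)
  rwa [hS.flowDefect_self ⟨ht0, htT⟩, sub_zero, flowDefect, sub_zero,
    intervalIntegral.integral_const_mul] at hdefect

theorem semiflow_error_estimate {E : Type*} [MetricSpace E] (T L : ℝ) (hT : 0 < T) (hL : 0 < L)
    (S : ℝ → ℝ → E → E)
    (hS0 : ∀ τ ∈ Icc (0:ℝ) T, ∀ μ : E, S 0 τ μ = μ)
    (hSsemi : ∀ s t τ : ℝ, 0 ≤ s → 0 ≤ t → 0 ≤ τ → τ + s + t ≤ T →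
      ∀ μ : E, S (t + s) τ μ = S t (τ + s) (S s τ μ))
    (hSlip : ∀ s t τ : ℝ, 0 ≤ s → 0 ≤ t → 0 ≤ τ → τ + s ≤ T → τ + t ≤ T →
      ∀ μ ν : E, dist (S t τ μ) (S s τ ν) ≤ L * (dist μ ν + |t - s|))
    (ν : ℝ → E) (Lν : NNReal) (hν : LipschitzOnWith Lν ν (Icc 0 T))
    (f : ℝ → ℝ)
    (hf : ∀ τ ∈ Ico (0:ℝ) T,
      f τ = Filter.liminf (fun h : ℝ => dist (ν (τ + h)) (S h τ (ν τ)) / h)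
              (nhdsWithin 0 (Ioi 0)))
    (hfmeas : Measurable f)
    (hfint : IntervalIntegrable f volume 0 T) :
    ∀ t ∈ Icc (0:ℝ) T, dist (ν t) (S t 0 (ν 0)) ≤ L * ∫ τ in (0:ℝ)..t, f τ :=
  semiflow_error_estimate_general T L hL S hS0 hSsemi hSlip ν Lν hν f hf hfint
end

section
/- Consider the linear ODE system on [0,T]: π'(t) = b·m(t) + (b' - c)·π(t), m'(t) = -c·m(t) - c'·π(t) + g(t), with π(0) = 0 and m(0) = 0, where b > 0, b', c ≥ 0, c' ∈ ℝ are constants and g : [0,T] → ℝ≥0 is continuous with g(t) > 0. Then there exist t̃ > 0 and constants C₁, C₂ > 0 such that for all t ∈ [0, t̃]: |π(t)| ≤ C₁ t ∫_0^t g(τ) dτ and m(t) ≥ C₂ ∫_0^t g(τ) dτ. -/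
/-!
Since `π(0) = m(0) = 0` and the right-hand sides are continuous, both `π` and `m` are `O(t)`
near `0`. Hence `π' = O(t)`, so `π = O(t²)`, while `m' = g + O(t)`. As `g` is bounded below by
some `gmin > 0`, we have `t ≤ ∫₀ᵗ g / gmin`; so `π = O(t ∫₀ᵗ g)`, and once the `O(t)` term is
below `gmin / 2` we get `m' ≥ g / 2`, i.e. `m(t) ≥ ½ ∫₀ᵗ g`.
-/

open Set intervalIntegral MeasureTheory

theorem abs_le_mul_of_abs_deriv_le {f f' : ℝ → ℝ} {D t : ℝ} (ht : 0 ≤ t) (hf0 : f 0 = 0)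
    (hf : ∀ s ∈ Icc 0 t, HasDerivAt f (f' s) s) (hD : ∀ s ∈ Icc 0 t, |f' s| ≤ D) :
    |f t| ≤ D * t :=
  image_norm_le_of_norm_deriv_right_le_deriv_boundary (B := fun s => D * s)
    (fun s hs => (hf s hs).continuousAt.continuousWithinAt)
    (fun s hs => (hf s (Ico_subset_Icc_self hs)).hasDerivWithinAt)
    (by simp [hf0]) (fun s => (hasDerivAt_id s).const_mul D |>.congr_deriv (mul_one D))
    (fun s hs => hD s (Ico_subset_Icc_self hs)) ⟨ht, le_rfl⟩

theorem abs_le_mul_sq_of_abs_deriv_le {f f' : ℝ → ℝ} {D t : ℝ} (ht : 0 ≤ t) (hf0 : f 0 = 0)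
    (hf : ∀ s ∈ Icc 0 t, HasDerivAt f (f' s) s) (hD : ∀ s ∈ Icc 0 t, |f' s| ≤ D * s) :
    |f t| ≤ D / 2 * t ^ 2 :=
  image_norm_le_of_norm_deriv_right_le_deriv_boundary (B := fun s => D / 2 * s ^ 2)
    (fun s hs => (hf s hs).continuousAt.continuousWithinAt)
    (fun s hs => (hf s (Ico_subset_Icc_self hs)).hasDerivWithinAt)
    (by simp [hf0])
    (fun s => (hasDerivAt_pow 2 s).const_mul (D / 2) |>.congr_deriv (by ring))
    (fun s hs => hD s (Ico_subset_Icc_self hs)) ⟨ht, le_rfl⟩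

theorem exists_abs_le_mul_of_hasDerivAt {f f' : ℝ → ℝ} {T : ℝ} (hf0 : f 0 = 0)
    (hf : ∀ s ∈ Icc 0 T, HasDerivAt f (f' s) s) (hf' : ContinuousOn f' (Icc 0 T)) :
    ∃ D, ∀ t ∈ Icc 0 T, |f t| ≤ D * t := by
  obtain ⟨D, hD⟩ := isCompact_Icc.exists_bound_of_continuousOn hf'
  have hsub {t} (ht : t ∈ Icc (0 : ℝ) T) : Icc 0 t ⊆ Icc 0 T := Icc_subset_Icc_right ht.2
  exact ⟨D, fun t ht => abs_le_mul_of_abs_deriv_le ht.1 hf0 (fun s hs => hf s (hsub ht hs))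
    (fun s hs => hD s (hsub ht hs))⟩

theorem integral_le_of_hasDerivAt_of_le {f f' φ : ℝ → ℝ} {t : ℝ} (ht : 0 ≤ t) (hf0 : f 0 = 0)
    (hf : ∀ s ∈ Icc 0 t, HasDerivAt f (f' s) s) (hφ : IntegrableOn φ (Icc 0 t))
    (hφf : ∀ s ∈ Icc 0 t, φ s ≤ f' s) : ∫ s in 0..t, φ s ≤ f t := by
  simpa [hf0] using integral_le_sub_of_hasDeriv_right_of_le ht
    (fun s hs => (hf s hs).continuousAt.continuousWithinAt)
    (fun s hs => (hf s (Ioo_subset_Icc_self hs)).hasDerivWithinAt) hφ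
    (fun s hs => hφf s (Ioo_subset_Icc_self hs))

theorem abs_mul_add_mul_le {x y u v P Q s : ℝ} (hu : |u| ≤ P * s) (hv : |v| ≤ Q * s) :
    |x * u + y * v| ≤ (|x| * P + |y| * Q) * s :=
  calc |x * u + y * v| ≤ |x| * |u| + |y| * |v| := by
        simpa only [abs_mul] using abs_add_le (x * u) (y * v)
    _ ≤ |x| * (P * s) + |y| * (Q * s) := by gcongr
    _ = (|x| * P + |y| * Q) * s := by ring

theorem exists_abs_linear_forms_le_mul {T b b' c c' : ℝ} {g π m : ℝ → ℝ}
    (hg_cont : ContinuousOn g (Icc 0 T)) (hπ0 : π 0 = 0) (hm0 : m 0 = 0)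
    (hπ : ∀ t ∈ Icc (0:ℝ) T, HasDerivAt π (b * m t + (b' - c) * π t) t)
    (hm : ∀ t ∈ Icc (0:ℝ) T, HasDerivAt m (-c * m t - c' * π t + g t) t) :
    ∃ A > (0:ℝ), ∀ s ∈ Icc 0 T,
      |b * m s + (b' - c) * π s| ≤ A * s ∧ |c * m s + c' * π s| ≤ A * s := by
  have hπc : ContinuousOn π (Icc 0 T) := fun s hs => (hπ s hs).continuousAt.continuousWithinAt
  have hmc : ContinuousOn m (Icc 0 T) := fun s hs => (hm s hs).continuousAt.continuousWithinAt
  obtain ⟨Dπ, hDπ⟩ := exists_abs_le_mul_of_hasDerivAt hπ0 hπ (by fun_prop)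
  obtain ⟨Dm, hDm⟩ := exists_abs_le_mul_of_hasDerivAt hm0 hm (by fun_prop)
  set X := |b| * Dm + |b' - c| * Dπ
  set Y := |c| * Dm + |c'| * Dπ
  refine ⟨max (max X Y) 1, by positivity, fun s hs => ⟨?_, ?_⟩⟩
  · refine (abs_mul_add_mul_le (hDm s hs) (hDπ s hs)).trans ?_
    gcongr
    · exact hs.1
    · exact (le_max_left X Y).trans (le_max_left _ _)
  · refine (abs_mul_add_mul_le (hDm s hs) (hDπ s hs)).trans ?_
    gcongr
    · exact hs.1
    · exact (le_max_right X Y).trans (le_max_left _ _)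

theorem ebt_boundary_cohort_estimates_general (T b b' c c' : ℝ) (hT : 0 < T)
    (g : ℝ → ℝ) (hg_cont : ContinuousOn g (Icc 0 T)) (hg_pos : ∀ t ∈ Icc (0:ℝ) T, 0 < g t)
    (π m : ℝ → ℝ) (hπ0 : π 0 = 0) (hm0 : m 0 = 0)
    (hπ : ∀ t ∈ Icc (0:ℝ) T, HasDerivAt π (b * m t + (b' - c) * π t) t)
    (hm : ∀ t ∈ Icc (0:ℝ) T, HasDerivAt m (-c * m t - c' * π t + g t) t) :
    ∃ ttilde > (0:ℝ), ttilde ≤ T ∧ ∃ C₁ > (0:ℝ), ∃ C₂ > (0:ℝ),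
      ∀ t ∈ Icc (0:ℝ) ttilde,
        |π t| ≤ C₁ * t * ∫ τ in (0:ℝ)..t, g τ ∧
        C₂ * ∫ τ in (0:ℝ)..t, g τ ≤ m t := by
  obtain ⟨s₀, hs₀, hmin⟩ := isCompact_Icc.exists_isMinOn (nonempty_Icc.2 hT.le) hg_cont
  set gmin := g s₀
  have hgmin : 0 < gmin := hg_pos s₀ hs₀
  obtain ⟨A, hA, hAbound⟩ := exists_abs_linear_forms_le_mul hg_cont hπ0 hm0 hπ hm
  refine ⟨min T (gmin / (2 * A)), by positivity, min_le_left _ _, A / (2 * gmin), by positivity,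
    1 / 2, by norm_num, fun t ht => ?_⟩
  have hsub : Icc 0 t ⊆ Icc 0 T := Icc_subset_Icc_right (ht.2.trans (min_le_left _ _))
  have hg_int : IntegrableOn g (Icc 0 t) := (hg_cont.mono hsub).integrableOn_Icc
  have hg_ge : gmin * t ≤ ∫ τ in (0:ℝ)..t, g τ := by
    simpa [mul_comm] using integral_mono_on ht.1 (intervalIntegrable_const (μ := volume))
      ((hg_cont.mono hsub).intervalIntegrable_of_Icc ht.1) (fun s hs => hmin (hsub hs))
  constructor
  · calc |π t| ≤ A / 2 * t ^ 2 := abs_le_mul_sq_of_abs_deriv_le ht.1 hπ0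
          (fun s hs => hπ s (hsub hs)) (fun s hs => (hAbound s (hsub hs)).1)
      _ = A / (2 * gmin) * t * (gmin * t) := by field_simp
      _ ≤ A / (2 * gmin) * t * ∫ τ in (0:ℝ)..t, g τ := by
          gcongr
          exact mul_nonneg (by positivity) ht.1
  · rw [← intervalIntegral.integral_const_mul]
    refine integral_le_of_hasDerivAt_of_le ht.1 hm0 (fun s hs => hm s (hsub hs))
      (hg_int.const_mul _) fun s hs => ?_
    have hAs : A * s ≤ gmin / 2 := by
      have := (le_div_iff₀ (by positivity)).1 (hs.2.trans (ht.2.trans (min_le_right _ _)))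
      linarith
    have hgs : gmin ≤ g s := hmin (hsub hs)
    have hlin := abs_le.1 (hAbound s (hsub hs)).2
    linarith

theorem ebt_boundary_cohort_estimates (T b b' c c' : ℝ) (hT : 0 < T)
    (hb : 0 < b) (hb' : 0 ≤ b') (hc : 0 ≤ c)
    (g : ℝ → ℝ) (hg_cont : ContinuousOn g (Icc 0 T)) (hg_pos : ∀ t ∈ Icc (0:ℝ) T, 0 < g t)
    (π m : ℝ → ℝ) (hπ0 : π 0 = 0) (hm0 : m 0 = 0)
    (hπ : ∀ t ∈ Icc (0:ℝ) T, HasDerivAt π (b * m t + (b' - c) * π t) t)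
    (hm : ∀ t ∈ Icc (0:ℝ) T, HasDerivAt m (-c * m t - c' * π t + g t) t) :
    ∃ ttilde > (0:ℝ), ttilde ≤ T ∧ ∃ C₁ > (0:ℝ), ∃ C₂ > (0:ℝ),
      ∀ t ∈ Icc (0:ℝ) ttilde,
        |π t| ≤ C₁ * t * ∫ τ in (0:ℝ)..t, g τ ∧
        C₂ * ∫ τ in (0:ℝ)..t, g τ ≤ m t :=
  ebt_boundary_cohort_estimates_general T b b' c c' hT g hg_cont hg_pos π m hπ0 hm0 hπ hm
end

section
/- Suppose m, n : [τ, τ+h] → ℝ≥0 satisfy m(t) = m(τ) - ∫_τ^t c₁(s) m(s) ds and n(t) = n(τ) - ∫_τ^t c₂(s) n(s) ds with m(τ) = n(τ) ≤ M, 0 ≤ c₁(s), c₂(s) ≤ C, and |c₁(s) - c₂(s)| ≤ K h for all s ∈ [τ, τ+h]. Then |m(τ+h) - n(τ+h)| ≤ (M K h²) e^{C h} = O(h²). -/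
open Set intervalIntegral MeasureTheory

theorem mass_comparison_internal_cohorts (M C K τ h : ℝ) (hh : 0 ≤ h)
    (hM : 0 ≤ M) (hC : 0 ≤ C) (hK : 0 ≤ K)
    (m n c₁ c₂ : ℝ → ℝ)
    (hm_cont : ContinuousOn m (Icc τ (τ + h))) (hn_cont : ContinuousOn n (Icc τ (τ + h)))
    (hm_nonneg : ∀ t ∈ Icc τ (τ + h), 0 ≤ m t) (hn_nonneg : ∀ t ∈ Icc τ (τ + h), 0 ≤ n t)
    (hc₁ : ∀ s ∈ Icc τ (τ + h), 0 ≤ c₁ s ∧ c₁ s ≤ C)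
    (hc₂ : ∀ s ∈ Icc τ (τ + h), 0 ≤ c₂ s ∧ c₂ s ≤ C)
    (hc_diff : ∀ s ∈ Icc τ (τ + h), |c₁ s - c₂ s| ≤ K * h)
    (hinit_eq : m τ = n τ) (hinit_le : m τ ≤ M)
    (hc₁m_int : IntervalIntegrable (fun s => c₁ s * m s) volume τ (τ + h))
    (hc₂n_int : IntervalIntegrable (fun s => c₂ s * n s) volume τ (τ + h))
    (hm_eq : ∀ t ∈ Icc τ (τ + h), m t = m τ - ∫ s in τ..t, c₁ s * m s)
    (hn_eq : ∀ t ∈ Icc τ (τ + h), n t = n τ - ∫ s in τ..t, c₂ s * n s) :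
    |m (τ + h) - n (τ + h)| ≤ (M * K * h ^ 2) * Real.exp (C * h) := by
  have hτh : τ ≤ τ + h := by linarith
  set ε : ℝ := M * K * h ^ 2 with hε
  have hε0 : 0 ≤ ε := by positivity
  set g : ℝ → ℝ := fun s => |m s - n s| with hg
  have hg_cont : ContinuousOn g (Icc τ (τ + h)) := (hm_cont.sub hn_cont).abs
  have hg_int : IntervalIntegrable g volume τ (τ + h) :=
    ContinuousOn.intervalIntegrable (by rwa [uIcc_of_le hτh])
  set ψ : ℝ → ℝ := fun t => ∫ s in τ..t, g s with hψ
  -- n is bounded by M on the interval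
  have hnM : ∀ s ∈ Icc τ (τ + h), n s ≤ M := by
    intro s hs
    have h0 : (0:ℝ) ≤ ∫ u in τ..s, c₂ u * n u := by
      apply intervalIntegral.integral_nonneg hs.1
      intro u hu
      have hu' : u ∈ Icc τ (τ + h) := ⟨hu.1, hu.2.trans hs.2⟩
      exact mul_nonneg (hc₂ u hu').1 (hn_nonneg u hu')
    have := hn_eq s hs
    rw [this]
    have : n τ ≤ M := hinit_eq ▸ hinit_le
    linarith
  -- key integral inequality
  have key : ∀ t ∈ Icc τ (τ + h), |m t - n t| ≤ C * ψ t + ε := by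
    intro t ht
    have hsub : uIcc τ t ⊆ uIcc τ (τ + h) := by
      rw [uIcc_of_le ht.1, uIcc_of_le hτh]
      exact Icc_subset_Icc le_rfl ht.2
    have int1 : IntervalIntegrable (fun s => c₁ s * m s) volume τ t := hc₁m_int.mono_set hsub
    have int2 : IntervalIntegrable (fun s => c₂ s * n s) volume τ t := hc₂n_int.mono_set hsub
    have heq : m t - n t = ∫ s in τ..t, (c₂ s * n s - c₁ s * m s) := by
      rw [intervalIntegral.integral_sub int2 int1, hm_eq t ht, hn_eq t ht, hinit_eq]
      ring
    have habs : |m t - n t| ≤ ∫ s in τ..t, |c₂ s * n s - c₁ s * m s| := by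
      rw [heq]
      exact intervalIntegral.abs_integral_le_integral_abs ht.1
    have hmono : (∫ s in τ..t, |c₂ s * n s - c₁ s * m s|)
        ≤ ∫ s in τ..t, (C * g s + M * (K * h)) := by
      apply intervalIntegral.integral_mono_on ht.1 (int2.sub int1).abs
      · apply IntervalIntegrable.add _ intervalIntegrable_const
        exact (hg_int.mono_set hsub).const_mul C
      · intro s hs
        have hs' : s ∈ Icc τ (τ + h) := ⟨hs.1, hs.2.trans ht.2⟩
        have e : c₂ s * n s - c₁ s * m s = -(c₁ s * (m s - n s)) - (c₁ s - c₂ s) * n s := by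
          ring
        rw [e]
        calc |-(c₁ s * (m s - n s)) - (c₁ s - c₂ s) * n s|
            ≤ |-(c₁ s * (m s - n s))| + |(c₁ s - c₂ s) * n s| := abs_sub _ _
          _ = |c₁ s| * |m s - n s| + |c₁ s - c₂ s| * |n s| := by
              rw [abs_neg, abs_mul, abs_mul]
          _ ≤ C * g s + (K * h) * M := by
              apply add_le_add
              · apply mul_le_mul_of_nonneg_right _ (abs_nonneg _)
                rw [abs_of_nonneg (hc₁ s hs').1]; exact (hc₁ s hs').2
              · apply mul_le_mul (hc_diff s hs') _ (abs_nonneg _) (by positivity)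
                rw [abs_of_nonneg (hn_nonneg s hs')]; exact hnM s hs'
          _ = C * g s + M * (K * h) := by ring
    have hval : (∫ s in τ..t, (C * g s + M * (K * h)))
        = C * ψ t + M * (K * h) * (t - τ) := by
      rw [intervalIntegral.integral_add ((hg_int.mono_set hsub).const_mul C)
        intervalIntegrable_const, intervalIntegral.integral_const_mul,
        intervalIntegral.integral_const, smul_eq_mul]
      ring
    have htτ : M * (K * h) * (t - τ) ≤ ε := by
      have h1 : t - τ ≤ h := by linarith [ht.2]
      have : M * (K * h) * (t - τ) ≤ M * (K * h) * h :=
        mul_le_mul_of_nonneg_left h1 (by positivity)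
      nlinarith
    calc |m t - n t| ≤ ∫ s in τ..t, |c₂ s * n s - c₁ s * m s| := habs
      _ ≤ C * ψ t + M * (K * h) * (t - τ) := hval ▸ hmono
      _ ≤ C * ψ t + ε := by linarith
  -- ψ is continuous and has right derivative g
  have hψ_cont : ContinuousOn ψ (Icc τ (τ + h)) := by
    have := intervalIntegral.continuousOn_primitive_interval
      (f := g) (μ := volume) (a := τ) (b := τ + h)
      (by rw [uIcc_of_le hτh]; exact (intervalIntegrable_iff_integrableOn_Icc_of_le hτh).mp hg_int)
    rwa [uIcc_of_le hτh] at this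
  have hψ_deriv : ∀ x ∈ Ico τ (τ + h), HasDerivWithinAt ψ (g x) (Ici x) x := by
    intro x hx
    have hIcc_mem : Icc τ (τ + h) ∈ nhdsWithin x (Ici x) := by
      refine Filter.mem_of_superset (inter_mem_nhdsWithin _ (Iio_mem_nhds hx.2)) ?_
      rintro y ⟨hy1, hy2⟩
      exact ⟨hx.1.trans hy1, le_of_lt hy2⟩
    have hint : IntervalIntegrable g volume τ x := hg_int.mono_set
      (by rw [uIcc_of_le hx.1, uIcc_of_le hτh]; exact Icc_subset_Icc le_rfl hx.2.le)
    have hIcc_mem' : Icc τ (τ + h) ∈ nhdsWithin x (Ioi x) :=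
      nhdsWithin_mono x Ioi_subset_Ici_self hIcc_mem
    have hmeas : StronglyMeasurableAtFilter g (nhdsWithin x (Ioi x)) volume :=
      ⟨Icc τ (τ + h), hIcc_mem', hg_cont.aestronglyMeasurable measurableSet_Icc⟩
    have hcw : ContinuousWithinAt g (Ioi x) x :=
      ((hg_cont.continuousWithinAt ⟨hx.1, hx.2.le⟩).mono_of_mem_nhdsWithin hIcc_mem).mono
        Ioi_subset_Ici_self
    exact intervalIntegral.integral_hasDerivWithinAt_right hint hmeas hcw
  have hψ_nonneg : ∀ x ∈ Icc τ (τ + h), 0 ≤ ψ x := by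
    intro x hx
    apply intervalIntegral.integral_nonneg hx.1
    intro u _; exact abs_nonneg _
  have hψτ : ψ τ = 0 := intervalIntegral.integral_same
  have gron := norm_le_gronwallBound_of_norm_deriv_right_le hψ_cont hψ_deriv
    (by rw [hψτ, norm_zero]) (fun x hx => by
      have hx' : x ∈ Icc τ (τ + h) := ⟨hx.1, hx.2.le⟩
      rw [Real.norm_eq_abs, Real.norm_eq_abs, abs_abs, abs_of_nonneg (hψ_nonneg x hx')]
      exact key x hx') (τ + h) ⟨hτh, le_rfl⟩
  rw [Real.norm_eq_abs, abs_of_nonneg (hψ_nonneg _ ⟨hτh, le_rfl⟩), add_sub_cancel_left] at gron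
  have final := key (τ + h) ⟨hτh, le_rfl⟩
  rcases eq_or_ne C 0 with hC0 | hC0
  · subst hC0
    simp only [zero_mul, zero_add] at final
    simpa [Real.exp_zero] using final
  · rw [gronwallBound_of_K_ne_0 hC0] at gron
    have hCpos : 0 < C := lt_of_le_of_ne hC hC0.symm
    have : C * ψ (τ + h) ≤ ε * Real.exp (C * h) - ε := by
      have := mul_le_mul_of_nonneg_left gron hC
      calc C * ψ (τ + h) ≤ C * (0 * Real.exp (C * h) + ε / C * (Real.exp (C * h) - 1)) := this
        _ = ε * Real.exp (C * h) - ε := by field_simp; ring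
    linarith
end
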